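/- arXiv:1402.3485 — 5 statements merged into one kernel-verified Lean document; each statement's English description precedes it below -/
import Mathlib

section
/- For α, β > -1, n ≥ 1, and x ∈ [0,1], the first moment of the Beta operator is T_{n,1}^{α,β}(x) = B_n^{α,β}(e_1 - x·e_0; x) = (α + 1 - (α+β+2)x)/(n+α+β+2). -/
open MeasureTheory intervalIntegral Filter

/-- The Beta operator with Jacobi weights: `B_n^{α,β}(f;x)`. -/
noncomputable def Bop (n α β : ℝ) (f : ℝ → ℝ) (x : ℝ) : ℝ :=
  (∫ t in (0:ℝ)..1, t ^ (n * x + α) * (1 - t) ^ (n - n * x + β) * f t) /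
  (∫ t in (0:ℝ)..1, t ^ (n * x + α) * (1 - t) ^ (n - n * x + β))

/-- The `m`-th central moment `T_{n,m}^{α,β}(x)`. -/
noncomputable def T (n α β : ℝ) (m : ℕ) (x : ℝ) : ℝ :=
  Bop n α β (fun t => (t - x) ^ m) x

/-!
The weight `t ^ a * (1 - t) ^ b` integrates to the Beta value `B(a + 1, b + 1)`, and
`Γ(s + 1) = s Γ(s)` gives `B(a + 2, b + 1) = (a + 1) / (a + b + 2) * B(a + 1, b + 1)`. Hence the
mean of `t` under the normalized weight with `a = n x + α`, `b = n - n x + β` is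
`(n x + α + 1) / (n + α + β + 2)`, and subtracting `x` gives the first central moment.
-/

open ProbabilityTheory

lemma beta_add_one_left {p q : ℝ} (hp : 0 < p) (hq : 0 < q) :
    beta (p + 1) q = p / (p + q) * beta p q := by
  have hpq : p + q ≠ 0 := (add_pos hp hq).ne'
  rw [beta, beta, Real.Gamma_add_one hp.ne', add_right_comm, Real.Gamma_add_one hpq]
  have := (Real.Gamma_pos_of_pos (add_pos hp hq)).ne'
  field_simp

lemma integral_rpow_mul_one_sub_rpow {a b : ℝ} (ha : -1 < a) (hb : -1 < b) :
    ∫ t in (0:ℝ)..1, t ^ a * (1 - t) ^ b = beta (a + 1) (b + 1) := by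
  have ha' : 0 < a + 1 := by linarith
  have hb' : 0 < b + 1 := by linarith
  rw [beta_eq_betaIntegralReal _ _ ha' hb', Complex.betaIntegral,
    ← Complex.ofReal_re (∫ _ in _.._, _), ← intervalIntegral.integral_ofReal]
  congr 1
  refine intervalIntegral.integral_congr fun t ht => ?_
  rw [Set.uIcc_of_le zero_le_one] at ht
  simp only [Complex.ofReal_mul, Complex.ofReal_add, Complex.ofReal_one, add_sub_cancel_right]
  rw [Complex.ofReal_cpow ht.1, Complex.ofReal_cpow (sub_nonneg.2 ht.2), Complex.ofReal_sub,
    Complex.ofReal_one]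

lemma integral_rpow_add_one_mul_one_sub_rpow {a b : ℝ} (ha : -1 < a) (hb : -1 < b) :
    ∫ t in (0:ℝ)..1, t ^ (a + 1) * (1 - t) ^ b
      = (a + 1) / (a + b + 2) * ∫ t in (0:ℝ)..1, t ^ a * (1 - t) ^ b := by
  rw [integral_rpow_mul_one_sub_rpow (by linarith) hb, integral_rpow_mul_one_sub_rpow ha hb,
    beta_add_one_left (by linarith) (by linarith)]
  ring_nf

lemma integral_rpow_mul_one_sub_rpow_pos {a b : ℝ} (ha : -1 < a) (hb : -1 < b) :
    0 < ∫ t in (0:ℝ)..1, t ^ a * (1 - t) ^ b := by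
  rw [integral_rpow_mul_one_sub_rpow ha hb]
  exact beta_pos (by linarith) (by linarith)

lemma intervalIntegrable_rpow_mul_one_sub_rpow {a b : ℝ} (ha : -1 < a) (hb : -1 < b) :
    IntervalIntegrable (fun t => t ^ a * (1 - t) ^ b) volume 0 1 :=
  intervalIntegrable_of_integral_ne_zero (integral_rpow_mul_one_sub_rpow_pos ha hb).ne'

lemma integral_rpow_mul_one_sub_rpow_mul_sub {a b : ℝ} (ha : -1 < a) (hb : -1 < b) (x : ℝ) :
    ∫ t in (0:ℝ)..1, t ^ a * (1 - t) ^ b * (t - x)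
      = ((a + 1) / (a + b + 2) - x) * ∫ t in (0:ℝ)..1, t ^ a * (1 - t) ^ b := by
  have hsplit : ∀ t ∈ Set.uIcc (0:ℝ) 1,
      t ^ a * (1 - t) ^ b * (t - x) = t ^ (a + 1) * (1 - t) ^ b - x * (t ^ a * (1 - t) ^ b) := by
    intro t ht
    rw [Set.uIcc_of_le zero_le_one] at ht
    rw [Real.rpow_add_one' ht.1 (by linarith)]
    ring
  rw [intervalIntegral.integral_congr hsplit,
    intervalIntegral.integral_sub (intervalIntegrable_rpow_mul_one_sub_rpow (by linarith) hb)
      ((intervalIntegrable_rpow_mul_one_sub_rpow ha hb).const_mul x),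
    intervalIntegral.integral_const_mul, integral_rpow_add_one_mul_one_sub_rpow ha hb]
  ring

theorem first_moment_general (α β : ℝ) (hα : α > -1) (hβ : β > -1)
    (n : ℕ) (x : ℝ) (hx : x ∈ Set.Icc (0:ℝ) 1) :
    T n α β 1 x = (α + 1 - (α + β + 2) * x) / (n + α + β + 2) := by
  obtain ⟨hx0, hx1⟩ := hx
  have ha : -1 < n * x + α := by nlinarith [n.cast_nonneg (α := ℝ)]
  have hb : -1 < n - n * x + β := by nlinarith [n.cast_nonneg (α := ℝ)]
  have hden : (0:ℝ) < n + α + β + 2 := by linarith [n.cast_nonneg (α := ℝ)]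
  simp only [T, Bop, pow_one]
  rw [integral_rpow_mul_one_sub_rpow_mul_sub ha hb,
    mul_div_cancel_right₀ _ (integral_rpow_mul_one_sub_rpow_pos ha hb).ne',
    show n * x + α + (n - n * x + β) + 2 = (n + α + β + 2 : ℝ) by ring]
  field_simp
  ring

theorem first_moment (α β : ℝ) (hα : α > -1) (hβ : β > -1)
    (n : ℕ) (hn : 1 ≤ n) (x : ℝ) (hx : x ∈ Set.Icc (0:ℝ) 1) :
    T n α β 1 x = (α + 1 - (α + β + 2) * x) / (n + α + β + 2) :=
  first_moment_general α β hα hβ n x hx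
end

section
/- For α, β > -1, n ≥ 1, x ∈ (0,1), and f ∈ C¹[0,1], the identity B_n^{α,β}(ψ·f'; x) = B_n^{α,β}([(t-x)(n+α+β+2) + (x(α+β+2) - (α+1))]·f(t); x) holds, where ψ(t) = t(1-t). -/
/-!
With `a = n x + α` and `b = n (1 - x) + β` (both `> -1`), multiplying the weight
`t ^ a (1 - t) ^ b` by `ψ t = t (1 - t)` gives `u t = t ^ (a + 1) (1 - t) ^ (b + 1)`, which
vanishes at `0` and `1` and satisfies `u' t = t ^ a (1 - t) ^ b ((a + 1) - (a + b + 2) t)`.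
Integrating by parts, `∫ u f' = -∫ u' f`, and `(a + b + 2) t - (a + 1)` is exactly the multiplier
`(t - x)(n + α + β + 2) + x (α + β + 2) - (α + 1)` on the right-hand side.
-/

open MeasureTheory intervalIntegral Filter

open Set

section JacobiWeight

variable {a b : ℝ}

theorem intervalIntegrable_rpow_mul_one_sub_rpow_mul (ha : -1 < a) (hb : -1 < b) {g : ℝ → ℝ}
    (hg : ContinuousOn g (Icc 0 1)) :
    IntervalIntegrable (fun t => t ^ a * (1 - t) ^ b * g t) volume 0 1 := by
  -- Split at `1 / 2`, so that on each half only one factor of the weight is singular.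
  have hleft : IntervalIntegrable (fun t => t ^ a * (1 - t) ^ b * g t) volume 0 (1 / 2) := by
    have h := (intervalIntegrable_rpow' ha (a := 0) (b := 1 / 2)).mul_continuousOn
      (g := fun t => (1 - t) ^ b * g t) ?_
    · simpa only [mul_assoc] using h
    rw [uIcc_of_le (by norm_num)]
    refine ContinuousOn.mul ?_ (hg.mono (Icc_subset_Icc_right (by norm_num)))
    exact (continuousOn_const.sub continuousOn_id).rpow_const (f := fun t : ℝ => 1 - t)
      fun t ht => Or.inl (by linarith [ht.2])
  have hright : IntervalIntegrable (fun t => t ^ a * (1 - t) ^ b * g t) volume (1 / 2) 1 := by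
    have h := (intervalIntegrable_rpow' hb).comp_sub_left 1 (a := 0) (b := 1 / 2)
    norm_num at h
    have h' := h.symm.mul_continuousOn (g := fun t => t ^ a * g t) ?_
    · convert h' using 2; ring
    rw [uIcc_of_le (by norm_num)]
    refine ContinuousOn.mul ?_ (hg.mono (Icc_subset_Icc_left (by norm_num)))
    exact continuousOn_id.rpow_const (f := fun t : ℝ => t) fun t ht => Or.inl (by linarith [ht.1])
  exact hleft.trans hright

theorem hasDerivAt_rpow_add_one_mul_one_sub_rpow_add_one {t : ℝ} (ht : t ∈ Ioo 0 1) :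
    HasDerivAt (fun s => s ^ (a + 1) * (1 - s) ^ (b + 1))
      (t ^ a * (1 - t) ^ b * ((a + 1) - (a + b + 2) * t)) t := by
  have h1t : 0 < 1 - t := by linarith [ht.2]
  have hleft := Real.hasDerivAt_rpow_const (p := a + 1) (Or.inl ht.1.ne')
  have hright := (Real.hasDerivAt_rpow_const (p := b + 1) (Or.inl h1t.ne')).comp t
    ((hasDerivAt_id t).const_sub 1)
  refine (hleft.mul hright).congr_deriv ?_
  rw [Function.comp_apply, add_sub_cancel_right, add_sub_cancel_right,
    Real.rpow_add_one ht.1.ne', Real.rpow_add_one h1t.ne']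
  ring

theorem integral_rpow_mul_one_sub_rpow_mul_psi_mul_derivWithin (ha : -1 < a) (hb : -1 < b)
    {f : ℝ → ℝ} (hf : ContDiffOn ℝ 1 f (Icc 0 1)) :
    ∫ t in (0:ℝ)..1, t ^ a * (1 - t) ^ b * (t * (1 - t) * derivWithin f (Icc 0 1) t) =
      ∫ t in (0:ℝ)..1, t ^ a * (1 - t) ^ b * (((a + b + 2) * t - (a + 1)) * f t) := by
  set u : ℝ → ℝ := fun s => s ^ (a + 1) * (1 - s) ^ (b + 1)
  have hu_cont : ContinuousOn u (uIcc 0 1) :=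
    (continuousOn_id.rpow_const fun _ _ => Or.inr (by linarith)).mul
      ((continuousOn_const.sub continuousOn_id).rpow_const fun _ _ => Or.inr (by linarith))
  have hf_deriv : ∀ t ∈ Ioo (min 0 1) (max 0 1), HasDerivAt f (derivWithin f (Icc 0 1) t) t := by
    intro t ht
    rw [min_eq_left zero_le_one, max_eq_right zero_le_one] at ht
    exact (hf.differentiableOn one_ne_zero t (Ioo_subset_Icc_self ht)).hasDerivWithinAt
      |>.hasDerivAt (Icc_mem_nhds ht.1 ht.2)
  have hf'_cont : ContinuousOn (derivWithin f (Icc 0 1)) (Icc 0 1) :=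
    hf.continuousOn_derivWithin (uniqueDiffOn_Icc zero_lt_one) le_rfl
  calc ∫ t in (0:ℝ)..1, t ^ a * (1 - t) ^ b * (t * (1 - t) * derivWithin f (Icc 0 1) t)
      = ∫ t in (0:ℝ)..1, u t * derivWithin f (Icc 0 1) t := by
        refine integral_congr fun t ht => ?_
        rw [uIcc_of_le zero_le_one] at ht
        simp only [u, Real.rpow_add_one' ht.1 (by linarith : a + 1 ≠ 0),
          Real.rpow_add_one' (sub_nonneg.2 ht.2) (by linarith : b + 1 ≠ 0)]
        ring
    _ = u 1 * f 1 - u 0 * f 0 -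
          ∫ t in (0:ℝ)..1, t ^ a * (1 - t) ^ b * ((a + 1) - (a + b + 2) * t) * f t :=
        integral_mul_deriv_eq_deriv_mul_of_hasDerivAt hu_cont
          (by rw [uIcc_of_le zero_le_one]; exact hf.continuousOn)
          (fun t ht => by
            rw [min_eq_left zero_le_one, max_eq_right zero_le_one] at ht
            exact hasDerivAt_rpow_add_one_mul_one_sub_rpow_add_one ht)
          hf_deriv
          (intervalIntegrable_rpow_mul_one_sub_rpow_mul ha hb (by fun_prop))
          (hf'_cont.intervalIntegrable_of_Icc zero_le_one)
    _ = ∫ t in (0:ℝ)..1, t ^ a * (1 - t) ^ b * (((a + b + 2) * t - (a + 1)) * f t) := by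
        simp only [u, Real.zero_rpow (by linarith : a + 1 ≠ 0),
          Real.zero_rpow (by linarith : b + 1 ≠ 0), sub_self, zero_mul, mul_zero, zero_sub,
          ← intervalIntegral.integral_neg]
        congr 1 with t
        ring

end JacobiWeight

theorem beta_op_psi_deriv_identity_general (α β : ℝ) (hα : α > -1) (hβ : β > -1)
    (n : ℕ) (x : ℝ) (hx : x ∈ Set.Ioo (0:ℝ) 1)
    (f : ℝ → ℝ) (hf : ContDiffOn ℝ 1 f (Set.Icc (0:ℝ) 1)) :
    Bop n α β (fun t => t * (1 - t) * derivWithin f (Set.Icc (0:ℝ) 1) t) x =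
      Bop n α β
        (fun t => ((t - x) * (n + α + β + 2) + (x * (α + β + 2) - (α + 1))) * f t) x := by
  have hnx : 0 ≤ (n : ℝ) * x := mul_nonneg n.cast_nonneg hx.1.le
  have hnx' : 0 ≤ (n : ℝ) - n * x := by nlinarith [hx.2, (n.cast_nonneg : (0 : ℝ) ≤ n)]
  unfold Bop
  rw [integral_rpow_mul_one_sub_rpow_mul_psi_mul_derivWithin (by linarith) (by linarith) hf]
  congr 2 with t
  ring

theorem beta_op_psi_deriv_identity (α β : ℝ) (hα : α > -1) (hβ : β > -1)
    (n : ℕ) (hn : 1 ≤ n) (x : ℝ) (hx : x ∈ Set.Ioo (0:ℝ) 1)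
    (f : ℝ → ℝ) (hf : ContDiffOn ℝ 1 f (Set.Icc (0:ℝ) 1)) :
    Bop n α β (fun t => t * (1 - t) * derivWithin f (Set.Icc (0:ℝ) 1) t) x =
      Bop n α β
        (fun t => ((t - x) * (n + α + β + 2) + (x * (α + β + 2) - (α + 1))) * f t) x :=
  beta_op_psi_deriv_identity_general α β hα hβ n x hx f hf
end

section
/- For α, β > -1, n ≥ 1, nonnegative integers i, j, m, and x ∈ [0,1]: T_{n,m}^{α+i,β+j}(x) = [(n+α+β+2)^{(i+j)} / ((nx+α+1)^{(i)} (n(1-x)+β+1)^{(j)})] · Σ_{k=0}^{i+j} ([x^i(1-x)^j]^{(k)}/k!) · T_{n,m+k}^{α,β}(x), where [x^i(1-x)^j]^{(k)} denotes the k-th derivative of u ↦ u^i(1-u)^j evaluated at x. -/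
open MeasureTheory intervalIntegral Filter

section Aux
open Polynomial


lemma betaInt_integrable {a b : ℝ} (ha : -1 < a) (hb : -1 < b) :
    IntervalIntegrable (fun t : ℝ => t ^ a * (1 - t) ^ b) volume 0 1 := by
  have h := Complex.betaIntegral_convergent (u := (a:ℂ) + 1) (v := (b:ℂ) + 1)
    (by simp; linarith) (by simp; linarith)
  rw [intervalIntegrable_iff] at h ⊢
  have h2 : IntegrableOn (fun t : ℝ => ((t ^ a * (1 - t) ^ b : ℝ) : ℂ)) (Set.uIoc (0:ℝ) 1) volume := by
    refine h.congr_fun ?_ measurableSet_uIoc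
    intro t ht
    rw [Set.uIoc_of_le (by norm_num : (0:ℝ) ≤ 1)] at ht
    have ht0 : (0:ℝ) ≤ t := le_of_lt ht.1
    have ht1 : (0:ℝ) ≤ 1 - t := by linarith [ht.2]
    push_cast
    rw [Complex.ofReal_cpow ht0, Complex.ofReal_cpow ht1]
    push_cast
    ring_nf
  have h4 : IntegrableOn (fun t : ℝ => ((t ^ a * (1 - t) ^ b : ℝ) : ℂ).re)
      (Set.uIoc (0:ℝ) 1) volume := h2.re
  simpa using h4

lemma betaInt_eq {a b : ℝ} (ha : -1 < a) (hb : -1 < b) :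
    ∫ t in (0:ℝ)..1, t ^ a * (1 - t) ^ b =
      Real.Gamma (a + 1) * Real.Gamma (b + 1) / Real.Gamma (a + b + 2) := by
  have hs : 0 < ((a:ℂ) + 1).re := by simp; linarith
  have ht : 0 < ((b:ℂ) + 1).re := by simp; linarith
  have key := Complex.Gamma_mul_Gamma_eq_betaIntegral hs ht
  have hbi : Complex.betaIntegral ((a:ℂ)+1) ((b:ℂ)+1)
      = ((∫ t in (0:ℝ)..1, t ^ a * (1 - t) ^ b : ℝ) : ℂ) := by
    rw [Complex.betaIntegral, ← intervalIntegral.integral_ofReal]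
    refine intervalIntegral.integral_congr ?_
    intro t ht'
    rw [Set.uIcc_of_le (by norm_num : (0:ℝ) ≤ 1)] at ht'
    have ht0 : (0:ℝ) ≤ t := ht'.1
    have ht1 : (0:ℝ) ≤ 1 - t := by linarith [ht'.2]
    push_cast
    rw [Complex.ofReal_cpow ht0, Complex.ofReal_cpow ht1]
    push_cast
    ring_nf
  rw [hbi] at key
  have hab : (a:ℂ) + 1 + ((b:ℂ) + 1) = ((a + b + 2 : ℝ) : ℂ) := by push_cast; ring
  rw [hab] at key
  rw [show ((a:ℂ)+1) = ((a+1 : ℝ) : ℂ) by push_cast; ring,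
    show ((b:ℂ)+1) = ((b+1 : ℝ) : ℂ) by push_cast; ring] at key
  rw [Complex.Gamma_ofReal, Complex.Gamma_ofReal, Complex.Gamma_ofReal] at key
  have hΓ : Real.Gamma (a + b + 2) ≠ 0 := (Real.Gamma_pos_of_pos (by linarith)).ne'
  have key2 : Real.Gamma (a+1) * Real.Gamma (b+1)
      = Real.Gamma (a+b+2) * ∫ t in (0:ℝ)..1, t ^ a * (1 - t) ^ b := by
    exact_mod_cast key
  rw [key2]
  field_simp


lemma Gamma_add_nat {z : ℝ} (hz : 0 < z) (k : ℕ) :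
    Real.Gamma (z + k) = Real.Gamma z * (ascPochhammer ℝ k).eval z := by
  induction k with
  | zero => simp
  | succ k ih =>
    have hzk : z + k ≠ 0 := by positivity
    have : z + (k + 1 : ℕ) = (z + k) + 1 := by push_cast; ring
    rw [this, Real.Gamma_add_one hzk, ih, ascPochhammer_succ_right]
    simp [Polynomial.eval_mul]
    ring

lemma my_ascPochhammer_pos {z : ℝ} (hz : 0 < z) (k : ℕ) :
    0 < (ascPochhammer ℝ k).eval z := by
  have h := Gamma_add_nat hz k
  have h1 : 0 < Real.Gamma (z + k) := Real.Gamma_pos_of_pos (by positivity)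
  have h2 : 0 < Real.Gamma z := Real.Gamma_pos_of_pos hz
  nlinarith

lemma iteratedDeriv_polyEval (p : ℝ[X]) (k : ℕ) :
    iteratedDeriv k (fun u : ℝ => p.eval u) = fun u => (derivative^[k] p).eval u := by
  induction k with
  | zero => simp
  | succ k ih =>
    rw [iteratedDeriv_succ, ih, Function.iterate_succ_apply']
    funext u
    exact Polynomial.deriv (p := derivative^[k] p)

lemma taylor_expand (i j : ℕ) (x t : ℝ) :
    t ^ i * (1 - t) ^ j =
      ∑ k ∈ Finset.range (i + j + 1),
        iteratedDeriv k (fun u : ℝ => u ^ i * (1 - u) ^ j) x / (Nat.factorial k) * (t - x) ^ k := by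
  set p : ℝ[X] := X ^ i * (1 - X) ^ j with hp
  have hg : (fun u : ℝ => u ^ i * (1 - u) ^ j) = fun u => p.eval u := by
    funext u; simp [hp]
  have hdeg : p.natDegree < i + j + 1 := by
    have h1 : p.natDegree ≤ i + j := by
      refine le_trans (natDegree_mul_le) ?_
      have : ((1 - X : ℝ[X]) ^ j).natDegree ≤ j := by
        refine le_trans (natDegree_pow_le) ?_
        have : (1 - X : ℝ[X]).natDegree ≤ 1 := by
          refine le_trans (natDegree_sub_le _ _) ?_
          simp
        nlinarith
      simp only [natDegree_X_pow]
      omega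
    omega
  have hdeg' : (taylor x p).natDegree < i + j + 1 := by rwa [natDegree_taylor]
  have heval : p.eval t = (taylor x p).eval (t - x) := by
    rw [taylor_eval]; ring_nf
  have hsum := Polynomial.eval_eq_sum_range' hdeg' (t - x)
  have hcoeff : ∀ k, (taylor x p).coeff k
      = iteratedDeriv k (fun u : ℝ => u ^ i * (1 - u) ^ j) x / (Nat.factorial k) := by
    intro k
    rw [hg, iteratedDeriv_polyEval, taylor_coeff]
    have h := congrFun (Polynomial.factorial_smul_hasseDeriv (R := ℝ) k) p
    simp only [LinearMap.smul_apply] at h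
    have h2 : ((k.factorial : ℝ)) * (hasseDeriv k p).eval x = (derivative^[k] p).eval x := by
      rw [← h]; simp [nsmul_eq_mul]
    field_simp
    linarith [h2]
  calc t ^ i * (1 - t) ^ j = p.eval t := by simp [hp]
    _ = (taylor x p).eval (t - x) := heval
    _ = ∑ k ∈ Finset.range (i + j + 1), (taylor x p).coeff k * (t - x) ^ k := hsum
    _ = _ := by
        refine Finset.sum_congr rfl fun k _ => ?_
        rw [hcoeff k]

end Aux

open Polynomial in
theorem moment_parameter_shift (α β : ℝ) (hα : α > -1) (hβ : β > -1)
    (n : ℕ) (hn : 1 ≤ n) (i j m : ℕ) (x : ℝ) (hx : x ∈ Set.Icc (0:ℝ) 1) :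
    T n (α + i) (β + j) m x =
      (ascPochhammer ℝ (i + j)).eval (n + α + β + 2) /
          ((ascPochhammer ℝ i).eval (n * x + α + 1) *
            (ascPochhammer ℝ j).eval (n * (1 - x) + β + 1)) *
        ∑ k ∈ Finset.range (i + j + 1),
          iteratedDeriv k (fun u : ℝ => u ^ i * (1 - u) ^ j) x / (Nat.factorial k) *
            T n α β (m + k) x := by
  obtain ⟨hx0, hx1⟩ := hx
  have hnx : 0 ≤ (n:ℝ) * x := by positivity
  have hnx1 : (n:ℝ) * x ≤ n := by
    have : (n:ℝ) * x ≤ (n:ℝ) * 1 := by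
      apply mul_le_mul_of_nonneg_left hx1 (by positivity)
    simpa using this
  set A : ℝ := (n:ℝ) * x + α with hA
  set B : ℝ := (n:ℝ) - (n:ℝ) * x + β with hB
  have hA1 : 0 < A + 1 := by rw [hA]; linarith
  have hB1 : 0 < B + 1 := by rw [hB]; linarith
  have hAn : -1 < A := by linarith
  have hBn : -1 < B := by linarith
  have hAi : -1 < A + (i:ℝ) := by have : (0:ℝ) ≤ i := Nat.cast_nonneg i; linarith
  have hBj : -1 < B + (j:ℝ) := by have : (0:ℝ) ≤ j := Nat.cast_nonneg j; linarith
  set c : ℕ → ℝ := fun k =>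
    iteratedDeriv k (fun u : ℝ => u ^ i * (1 - u) ^ j) x / (Nat.factorial k) with hc
  set N : ℕ → ℝ := fun k => ∫ t in (0:ℝ)..1, t ^ A * (1 - t) ^ B * (t - x) ^ (m + k) with hN
  -- integrability
  have hInt : ∀ k : ℕ, IntervalIntegrable
      (fun t : ℝ => c k * (t ^ A * (1 - t) ^ B * (t - x) ^ (m + k))) volume 0 1 := by
    intro k
    have h1 : IntervalIntegrable (fun t : ℝ => t ^ A * (1 - t) ^ B * (t - x) ^ (m + k))
        volume 0 1 :=
      (betaInt_integrable hAn hBn).mul_continuousOn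
        (by fun_prop : ContinuousOn (fun t : ℝ => (t - x) ^ (m + k)) (Set.uIcc 0 1))
    exact h1.const_mul _
  -- numerator identity
  have hnum : (∫ t in (0:ℝ)..1,
        t ^ (A + (i:ℝ)) * (1 - t) ^ (B + (j:ℝ)) * (t - x) ^ m)
      = ∑ k ∈ Finset.range (i + j + 1), c k * N k := by
    have hcongr : (∫ t in (0:ℝ)..1,
          t ^ (A + (i:ℝ)) * (1 - t) ^ (B + (j:ℝ)) * (t - x) ^ m)
        = ∫ t in (0:ℝ)..1, ∑ k ∈ Finset.range (i + j + 1),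
            c k * (t ^ A * (1 - t) ^ B * (t - x) ^ (m + k)) := by
      apply intervalIntegral.integral_congr_ae
      have hone : ∀ᵐ t : ℝ, t ≠ 1 := by
        refine ae_iff.mpr ?_
        simpa using Real.volume_singleton (a := 1)
      filter_upwards [hone] with t ht1 htI
      rw [Set.uIoc_of_le (by norm_num : (0:ℝ) ≤ 1)] at htI
      have ht0 : 0 < t := htI.1
      have ht1' : 0 < 1 - t := lt_of_le_of_ne (by linarith [htI.2]) (by
        intro h; exact ht1 (by linarith))
      rw [Real.rpow_add ht0, Real.rpow_add ht1', Real.rpow_natCast, Real.rpow_natCast]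
      have hT := taylor_expand i j x t
      calc t ^ A * t ^ i * ((1 - t) ^ B * (1 - t) ^ j) * (t - x) ^ m
          = (t ^ A * (1 - t) ^ B) * ((t ^ i * (1 - t) ^ j) * (t - x) ^ m) := by ring
        _ = (t ^ A * (1 - t) ^ B) * ((∑ k ∈ Finset.range (i + j + 1),
              c k * (t - x) ^ k) * (t - x) ^ m) := by rw [hT]
        _ = ∑ k ∈ Finset.range (i + j + 1),
              c k * (t ^ A * (1 - t) ^ B * (t - x) ^ (m + k)) := by
            rw [Finset.sum_mul, Finset.mul_sum]
            exact Finset.sum_congr rfl fun k _ => by rw [pow_add]; ring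
    rw [hcongr, intervalIntegral.integral_finset_sum (fun k _ => hInt k)]
    exact Finset.sum_congr rfl fun k _ => by
      rw [intervalIntegral.integral_const_mul]
  -- Gamma facts
  set GA := Real.Gamma (A + 1) with hGA
  set GB := Real.Gamma (B + 1) with hGB
  set GAB := Real.Gamma (A + B + 2) with hGAB
  set P1 := (ascPochhammer ℝ (i + j)).eval (A + B + 2) with hP1
  set P2 := (ascPochhammer ℝ i).eval (A + 1) with hP2
  set P3 := (ascPochhammer ℝ j).eval (B + 1) with hP3
  have hGApos : 0 < GA := Real.Gamma_pos_of_pos hA1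
  have hGBpos : 0 < GB := Real.Gamma_pos_of_pos hB1
  have hGABpos : 0 < GAB := Real.Gamma_pos_of_pos (by linarith)
  have hP1pos : 0 < P1 := my_ascPochhammer_pos (by linarith) _
  have hP2pos : 0 < P2 := my_ascPochhammer_pos hA1 _
  have hP3pos : 0 < P3 := my_ascPochhammer_pos hB1 _
  have hg1 : Real.Gamma (A + (i:ℝ) + 1) = GA * P2 := by
    rw [show A + (i:ℝ) + 1 = (A + 1) + (i:ℝ) by ring]
    exact Gamma_add_nat hA1 i
  have hg2 : Real.Gamma (B + (j:ℝ) + 1) = GB * P3 := by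
    rw [show B + (j:ℝ) + 1 = (B + 1) + (j:ℝ) by ring]
    exact Gamma_add_nat hB1 j
  have hg3 : Real.Gamma (A + (i:ℝ) + (B + (j:ℝ)) + 2) = GAB * P1 := by
    rw [show A + (i:ℝ) + (B + (j:ℝ)) + 2 = (A + B + 2) + ((i + j : ℕ) : ℝ) by
      push_cast; ring]
    exact Gamma_add_nat (by linarith) (i + j)
  have hD : (∫ t in (0:ℝ)..1, t ^ A * (1 - t) ^ B) = GA * GB / GAB :=
    betaInt_eq hAn hBn
  have hD' : (∫ t in (0:ℝ)..1, t ^ (A + (i:ℝ)) * (1 - t) ^ (B + (j:ℝ)))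
      = GA * P2 * (GB * P3) / (GAB * P1) := by
    rw [betaInt_eq hAi hBj, hg1, hg2, hg3]
  -- rewrite the statement's pochhammer arguments
  have e1 : (n:ℝ) + α + β + 2 = A + B + 2 := by rw [hA, hB]; ring
  have e2 : (n:ℝ) * x + α + 1 = A + 1 := by rw [hA]
  have e3 : (n:ℝ) * (1 - x) + β + 1 = B + 1 := by rw [hB]; ring
  rw [e1, e3]
  -- unfold T, Bop
  have eL1 : (n:ℝ) * x + (α + i) = A + (i:ℝ) := by rw [hA]; ring
  have eL2 : (n:ℝ) - (n:ℝ) * x + (β + j) = B + (j:ℝ) := by rw [hB]; ring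
  simp only [T, Bop, eL1, eL2]
  rw [hnum, hD', hD]
  have hsum : ∀ k ∈ Finset.range (i + j + 1), True := fun _ _ => trivial
  have : ∑ k ∈ Finset.range (i + j + 1),
      iteratedDeriv k (fun u : ℝ => u ^ i * (1 - u) ^ j) x / (Nat.factorial k) *
        ((∫ t in (0:ℝ)..1, t ^ A * (1 - t) ^ B * (t - x) ^ (m + k)) / (GA * GB / GAB))
      = (∑ k ∈ Finset.range (i + j + 1), c k * N k) / (GA * GB / GAB) := by
    rw [Finset.sum_div]
    exact Finset.sum_congr rfl fun k _ => (mul_div_assoc _ _ _).symm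
  rw [this]
  rw [hP1, hP2, hP3]
  field_simp
end

section
/- For n ≥ 1 and x ∈ (0,1), B_n^{-1,-1}(e_2; x) = nx(nx+1)/(n(n+1)) > x². Consequently, for each f ∈ C[0,1], lim_{m→∞} (B_n^{-1,-1})^m f(x) = (1-x)f(0) + x f(1) uniformly on [0,1]. -/
open MeasureTheory intervalIntegral Filter

/-- The Beta operator extended to the limiting cases `α = -1` (interpolation at `0`)
and `β = -1` (interpolation at `1`). -/
noncomputable def BopE (n α β : ℝ) (f : ℝ → ℝ) (x : ℝ) : ℝ :=
  if α = -1 ∧ x = 0 then f 0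
  else if β = -1 ∧ x = 1 then f 1
  else Bop n α β f x

/-- The `m`-th central moment of the extended Beta operator. -/
noncomputable def TE (n α β : ℝ) (m : ℕ) (x : ℝ) : ℝ :=
  BopE n α β (fun t => (t - x) ^ m) x

/-!
The operator `B = B_n^{-1,-1}` is positive, fixes affine functions, and maps `t (1 - t)` to
`n / (n + 1) * x (1 - x)`; both facts come from the first two moments of the Beta distribution
with parameters `n x`, `n - n x`. Given `ε > 0`, a continuous `f` differs from its linear
interpolant `ℓ` by at most `ε + M x (1 - x)` on `[0, 1]`. Positivity propagates this envelope
through the iteration, giving `|B^m f - ℓ| ≤ ε + M (n / (n + 1))^m x (1 - x)`, whose last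
term tends to `0` uniformly.
-/

open Set ProbabilityTheory

noncomputable def betaWeight (a b t : ℝ) : ℝ := t ^ (a - 1) * (1 - t) ^ (b - 1)

lemma betaWeight_nonneg (a b : ℝ) {t : ℝ} (ht : t ∈ Icc (0:ℝ) 1) : 0 ≤ betaWeight a b t :=
  mul_nonneg (Real.rpow_nonneg ht.1 _) (Real.rpow_nonneg (sub_nonneg.2 ht.2) _)

lemma betaWeight_add_one {a : ℝ} (ha : 0 < a) (b : ℝ) {t : ℝ} (ht : 0 ≤ t) :
    betaWeight (a + 1) b t = betaWeight a b t * t := by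
  rw [betaWeight, betaWeight, add_sub_cancel_right, mul_right_comm,
    ← Real.rpow_add_one' ht (by linarith), sub_add_cancel]

lemma ofReal_betaWeight (a b : ℝ) {t : ℝ} (ht : t ∈ Icc (0:ℝ) 1) :
    (betaWeight a b t : ℂ) = (t : ℂ) ^ ((a : ℂ) - 1) * (1 - (t : ℂ)) ^ ((b : ℂ) - 1) := by
  rw [betaWeight, Complex.ofReal_mul, Complex.ofReal_cpow ht.1,
    Complex.ofReal_cpow (sub_nonneg.2 ht.2)]
  push_cast
  rfl

lemma intervalIntegrable_betaWeight {a b : ℝ} (ha : 0 < a) (hb : 0 < b) :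
    IntervalIntegrable (betaWeight a b) volume 0 1 := by
  have h := Complex.betaIntegral_convergent (u := a) (v := b) (by simpa) (by simpa)
  rw [intervalIntegrable_iff_integrableOn_Ioc_of_le zero_le_one] at h ⊢
  refine IntegrableOn.congr_fun h.re (fun t ht => ?_) measurableSet_Ioc
  rw [← ofReal_betaWeight a b (Ioc_subset_Icc_self ht)]
  rfl

lemma integral_betaWeight {a b : ℝ} (ha : 0 < a) (hb : 0 < b) :
    ∫ t in (0:ℝ)..1, betaWeight a b t = beta a b := by
  rw [beta_eq_betaIntegralReal a b ha hb, Complex.betaIntegral,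
    ← Complex.ofReal_re (∫ _ in _.._, _), ← intervalIntegral.integral_ofReal]
  congr 1
  refine intervalIntegral.integral_congr fun t ht => ofReal_betaWeight a b ?_
  rwa [uIcc_of_le zero_le_one] at ht

lemma beta_add_one {a b : ℝ} (ha : 0 < a) (hb : 0 < b) :
    beta (a + 1) b = a / (a + b) * beta a b := by
  have hab : 0 < a + b := add_pos ha hb
  rw [beta, beta, Real.Gamma_add_one ha.ne', add_right_comm, Real.Gamma_add_one hab.ne']
  field_simp [(Real.Gamma_pos_of_pos hab).ne']

lemma integral_betaWeight_mul_quadratic {a b : ℝ} (ha : 0 < a) (hb : 0 < b) (c₀ c₁ c₂ : ℝ) :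
    ∫ t in (0:ℝ)..1, betaWeight a b t * (c₀ + c₁ * t + c₂ * t ^ 2) =
      (c₀ + c₁ * (a / (a + b)) + c₂ * (a * (a + 1) / ((a + b) * (a + b + 1)))) * beta a b := by
  have ha₁ : 0 < a + 1 := by linarith
  have hexpand : EqOn (fun t => betaWeight a b t * (c₀ + c₁ * t + c₂ * t ^ 2))
      (fun t => c₀ * betaWeight a b t + c₁ * betaWeight (a + 1) b t
        + c₂ * betaWeight (a + 1 + 1) b t) (uIcc 0 1) := by
    intro t ht
    rw [uIcc_of_le zero_le_one] at ht
    simp only [betaWeight_add_one ha₁ b ht.1, betaWeight_add_one ha b ht.1]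
    ring
  have i₀ := (intervalIntegrable_betaWeight ha hb).const_mul c₀
  have i₁ := (intervalIntegrable_betaWeight ha₁ hb).const_mul c₁
  have i₂ := (intervalIntegrable_betaWeight (by linarith : 0 < a + 1 + 1) hb).const_mul c₂
  rw [intervalIntegral.integral_congr hexpand, intervalIntegral.integral_add (i₀.add i₁) i₂,
    intervalIntegral.integral_add i₀ i₁]
  simp only [intervalIntegral.integral_const_mul]
  rw [integral_betaWeight ha hb, integral_betaWeight ha₁ hb,
    integral_betaWeight (by linarith) hb, beta_add_one ha₁ hb, beta_add_one ha hb,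
    add_right_comm a 1 b]
  have hab : 0 < a + b := by linarith
  field_simp

lemma betaParams_pos {N x : ℝ} (hN : 0 < N) (hx : x ∈ Ioo (0:ℝ) 1) :
    0 < N * x ∧ 0 < N - N * x :=
  ⟨mul_pos hN hx.1, by nlinarith [hx.2]⟩

lemma Bop_neg_one_neg_one {N x : ℝ} (hN : 0 < N) (hx : x ∈ Ioo (0:ℝ) 1) (g : ℝ → ℝ) :
    Bop N (-1) (-1) g x =
      (∫ t in (0:ℝ)..1, betaWeight (N * x) (N - N * x) t * g t) / beta (N * x) (N - N * x) := by
  obtain ⟨ha, hb⟩ := betaParams_pos hN hx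
  rw [← integral_betaWeight ha hb]
  simp only [Bop, betaWeight, sub_eq_add_neg]

lemma Bop_quadratic {N x : ℝ} (hN : 0 < N) (hx : x ∈ Ioo (0:ℝ) 1) (c₀ c₁ c₂ : ℝ) :
    Bop N (-1) (-1) (fun t => c₀ + c₁ * t + c₂ * t ^ 2) x =
      c₀ + c₁ * x + c₂ * (N * x * (N * x + 1) / (N * (N + 1))) := by
  obtain ⟨ha, hb⟩ := betaParams_pos hN hx
  rw [Bop_neg_one_neg_one hN hx, integral_betaWeight_mul_quadratic ha hb,
    mul_div_cancel_right₀ _ (beta_pos ha hb).ne', add_sub_cancel]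
  field_simp

lemma Bop_interpolant_add {N x : ℝ} (hN : 0 < N) (hx : x ∈ Ioo (0:ℝ) 1) (a b c : ℝ) :
    Bop N (-1) (-1) (fun t => (1 - t) * a + t * b + c * (t * (1 - t))) x =
      (1 - x) * a + x * b + c * (N / (N + 1)) * (x * (1 - x)) := by
  have hquad : (fun t => (1 - t) * a + t * b + c * (t * (1 - t))) =
      fun t => a + (b - a + c) * t + (-c) * t ^ 2 := by
    funext t; ring
  rw [hquad, Bop_quadratic hN hx]
  field_simp
  ring

lemma Bop_mono {N x : ℝ} (hN : 0 < N) (hx : x ∈ Ioo (0:ℝ) 1) {g h : ℝ → ℝ}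
    (hg : IntervalIntegrable (fun t => betaWeight (N * x) (N - N * x) t * g t) volume 0 1)
    (hh : IntervalIntegrable (fun t => betaWeight (N * x) (N - N * x) t * h t) volume 0 1)
    (hgh : ∀ t ∈ Icc (0:ℝ) 1, g t ≤ h t) :
    Bop N (-1) (-1) g x ≤ Bop N (-1) (-1) h x := by
  obtain ⟨ha, hb⟩ := betaParams_pos hN hx
  rw [Bop_neg_one_neg_one hN hx, Bop_neg_one_neg_one hN hx]
  refine div_le_div_of_nonneg_right ?_ (beta_pos ha hb).le
  exact intervalIntegral.integral_mono_on zero_le_one hg hh fun t ht =>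
    mul_le_mul_of_nonneg_left (hgh t ht) (betaWeight_nonneg _ _ ht)

lemma intervalIntegrable_betaWeight_mul {a b C : ℝ} (ha : 0 < a) (hb : 0 < b) {g : ℝ → ℝ}
    (hg : AEStronglyMeasurable g (volume.restrict (Ioc 0 1)))
    (hC : ∀ t ∈ Icc (0:ℝ) 1, |g t| ≤ C) :
    IntervalIntegrable (fun t => betaWeight a b t * g t) volume 0 1 := by
  have hw := intervalIntegrable_betaWeight ha hb
  rw [intervalIntegrable_iff_integrableOn_Ioc_of_le zero_le_one] at hw ⊢
  exact hw.mul_bdd hg ((ae_restrict_iff' measurableSet_Ioc).2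
    (ae_of_all _ fun t ht => hC t (Ioc_subset_Icc_self ht)))

-- `Bop_mono` needs the iterates to be integrable against the Beta weight (the integral of a
-- non-integrable function is `0`), so a.e.-measurability is carried along the iteration.
lemma aestronglyMeasurable_Bop (n α β : ℝ) {μ : Measure ℝ} {g : ℝ → ℝ}
    (hg : AEStronglyMeasurable g (volume.restrict (Ioc 0 1))) :
    AEStronglyMeasurable (Bop n α β g) μ := by
  have hint : ∀ {h : ℝ → ℝ}, AEStronglyMeasurable h (volume.restrict (Ioc 0 1)) →
      AEStronglyMeasurable
        (fun x => ∫ t in (0:ℝ)..1, t ^ (n * x + α) * (1 - t) ^ (n - n * x + β) * h t) μ := by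
    intro h hh
    simp only [intervalIntegral.integral_of_le zero_le_one]
    refine AEStronglyMeasurable.integral_prod_right'
      (f := fun p : ℝ × ℝ => p.2 ^ (n * p.1 + α) * (1 - p.2) ^ (n - n * p.1 + β) * h p.2) ?_
    exact (Measurable.aestronglyMeasurable (by fun_prop)).mul hh.comp_snd
  have hden := hint (h := fun _ => 1) aestronglyMeasurable_const
  simp only [mul_one] at hden
  exact ((hint hg).aemeasurable.div hden.aemeasurable).aestronglyMeasurable

lemma BopE_of_ne {n α β x : ℝ} (h₀ : x ≠ 0) (h₁ : x ≠ 1) (g : ℝ → ℝ) :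
    BopE n α β g x = Bop n α β g x := by
  simp [BopE, h₀, h₁]

-- `Bop_mono` needs the iterates to be integrable against the Beta weight (the integral of a
-- non-integrable function is `0`), so a.e.-measurability is carried along the iteration.
lemma aestronglyMeasurable_BopE (n α β : ℝ) {g : ℝ → ℝ}
    (hg : AEStronglyMeasurable g (volume.restrict (Ioc 0 1))) :
    AEStronglyMeasurable (BopE n α β g) (volume.restrict (Ioc 0 1)) := by
  refine (aestronglyMeasurable_Bop n α β hg).congr (ae_restrict_of_ae ?_)
  filter_upwards [Measure.ae_ne volume 0, Measure.ae_ne volume 1] with x h₀ h₁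
  exact (BopE_of_ne h₀ h₁ g).symm

lemma aestronglyMeasurable_iterate_BopE (n α β : ℝ) {g : ℝ → ℝ}
    (hg : AEStronglyMeasurable g (volume.restrict (Ioc 0 1))) (m : ℕ) :
    AEStronglyMeasurable ((BopE n α β)^[m] g) (volume.restrict (Ioc 0 1)) := by
  induction m with
  | zero => exact hg
  | succ m ih =>
    rw [Function.iterate_succ_apply']
    exact aestronglyMeasurable_BopE n α β ih

lemma abs_le_of_abs_sub_interpolant_le {y a b δ c t : ℝ} (ht : t ∈ Icc (0:ℝ) 1)
    (hy : |y - ((1 - t) * a + t * b)| ≤ δ + c * (t * (1 - t))) :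
    |y| ≤ |a| + |b| + |δ| + |c| := by
  have hφ : |t * (1 - t)| ≤ 1 := by
    rw [abs_of_nonneg (mul_nonneg ht.1 (sub_nonneg.2 ht.2))]; nlinarith [ht.1, ht.2]
  calc |y| = |(y - ((1 - t) * a + t * b)) + ((1 - t) * a + t * b)| := by
        rw [sub_add_cancel]
    _ ≤ |y - ((1 - t) * a + t * b)| + (|1 - t| * |a| + |t| * |b|) := by
        rw [← abs_mul, ← abs_mul]
        exact (abs_add_le _ _).trans (by gcongr; exact abs_add_le _ _)
    _ ≤ (|δ| + |c| * |t * (1 - t)|) + (1 * |a| + 1 * |b|) := by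
        gcongr
        · exact hy.trans (add_le_add (le_abs_self δ) ((le_abs_self _).trans_eq (abs_mul _ _)))
        · exact abs_le.2 ⟨by linarith [ht.2], by linarith [ht.1]⟩
        · exact abs_le.2 ⟨by linarith [ht.1], ht.2⟩
    _ ≤ |a| + |b| + |δ| + |c| := by nlinarith [abs_nonneg c]

lemma abs_BopE_sub_interpolant_le {N a b δ c : ℝ} (hN : 0 < N) {h : ℝ → ℝ}
    (hm : AEStronglyMeasurable h (volume.restrict (Ioc 0 1)))
    (hh : ∀ t ∈ Icc (0:ℝ) 1, |h t - ((1 - t) * a + t * b)| ≤ δ + c * (t * (1 - t))) :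
    ∀ x ∈ Icc (0:ℝ) 1, |BopE N (-1) (-1) h x - ((1 - x) * a + x * b)| ≤
      δ + c * (N / (N + 1)) * (x * (1 - x)) := by
  intro x hx
  rcases eq_or_lt_of_le hx.1 with rfl | hx₀
  · simpa [BopE] using hh 0 (left_mem_Icc.2 zero_le_one)
  rcases eq_or_lt_of_le hx.2 with rfl | hx₁
  · simpa [BopE] using hh 1 (right_mem_Icc.2 zero_le_one)
  have hxI : x ∈ Ioo (0:ℝ) 1 := ⟨hx₀, hx₁⟩
  obtain ⟨hwx, hwy⟩ := betaParams_pos hN hxI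
  set lower : ℝ → ℝ := fun t => (1 - t) * (a - δ) + t * (b - δ) + (-c) * (t * (1 - t))
  set upper : ℝ → ℝ := fun t => (1 - t) * (a + δ) + t * (b + δ) + c * (t * (1 - t))
  have hlower : ∀ t ∈ Icc (0:ℝ) 1, lower t ≤ h t := fun t ht => by
    have := (abs_le.1 (hh t ht)).1
    simp only [lower]; linarith
  have hupper : ∀ t ∈ Icc (0:ℝ) 1, h t ≤ upper t := fun t ht => by
    have := (abs_le.1 (hh t ht)).2
    simp only [upper]; linarith
  have hpoly : ∀ p : ℝ → ℝ, Continuous p →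
      IntervalIntegrable (fun t => betaWeight (N * x) (N - N * x) t * p t) volume 0 1 :=
    fun p hp => (intervalIntegrable_betaWeight hwx hwy).mul_continuousOn hp.continuousOn
  have hih := intervalIntegrable_betaWeight_mul hwx hwy hm
    fun t ht => abs_le_of_abs_sub_interpolant_le ht (hh t ht)
  have hle := Bop_mono hN hxI hih (hpoly upper (by fun_prop)) hupper
  have hge := Bop_mono hN hxI (hpoly lower (by fun_prop)) hih hlower
  rw [Bop_interpolant_add hN hxI] at hle hge
  rw [BopE_of_ne hx₀.ne' hx₁.ne, abs_le]
  constructor <;> linarith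

lemma abs_iterate_BopE_sub_interpolant_le {N a b δ c : ℝ} (hN : 0 < N) {h : ℝ → ℝ}
    (hm : AEStronglyMeasurable h (volume.restrict (Ioc 0 1)))
    (hh : ∀ t ∈ Icc (0:ℝ) 1, |h t - ((1 - t) * a + t * b)| ≤ δ + c * (t * (1 - t))) (m : ℕ) :
    ∀ x ∈ Icc (0:ℝ) 1, |(BopE N (-1) (-1))^[m] h x - ((1 - x) * a + x * b)| ≤
      δ + c * (N / (N + 1)) ^ m * (x * (1 - x)) := by
  induction m with
  | zero => simpa using hh
  | succ m ih =>
    rw [Function.iterate_succ_apply', pow_succ, ← mul_assoc]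
    exact abs_BopE_sub_interpolant_le hN (aestronglyMeasurable_iterate_BopE _ _ _ hm m) ih

lemma exists_abs_le_add_mul_of_continuousOn {g : ℝ → ℝ} (hg : ContinuousOn g (Icc 0 1))
    (h₀ : g 0 = 0) (h₁ : g 1 = 0) {ε : ℝ} (hε : 0 < ε) :
    ∃ M : ℝ, 0 ≤ M ∧ ∀ t ∈ Icc (0:ℝ) 1, |g t| ≤ ε + M * (t * (1 - t)) := by
  obtain ⟨C, hC⟩ := isCompact_Icc.exists_bound_of_continuousOn hg
  have hC₀ : 0 ≤ C := (norm_nonneg _).trans (hC 0 (left_mem_Icc.2 zero_le_one))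
  obtain ⟨δ₀, hδ₀, hd₀⟩ :=
    Metric.continuousWithinAt_iff.1 (hg 0 (left_mem_Icc.2 zero_le_one)) ε hε
  obtain ⟨δ₁, hδ₁, hd₁⟩ :=
    Metric.continuousWithinAt_iff.1 (hg 1 (right_mem_Icc.2 zero_le_one)) ε hε
  set δ := min δ₀ δ₁
  have hδ : 0 < δ := lt_min hδ₀ hδ₁
  refine ⟨C / (δ * δ), by positivity, fun t ht => ?_⟩
  have hφ : 0 ≤ C / (δ * δ) * (t * (1 - t)) := by
    have := mul_nonneg ht.1 (sub_nonneg.2 ht.2); positivity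
  rcases lt_or_ge t δ with hlt | hge
  · have hdist : dist t 0 < δ₀ := by
      rw [Real.dist_eq, sub_zero, abs_of_nonneg ht.1]
      exact hlt.trans_le (min_le_left _ _)
    have := hd₀ ht hdist
    rw [Real.dist_eq, h₀, sub_zero] at this
    linarith
  rcases lt_or_ge (1 - δ) t with hlt' | hge'
  · have hdist : dist t 1 < δ₁ := by
      rw [Real.dist_eq, abs_sub_comm, abs_of_nonneg (sub_nonneg.2 ht.2)]
      linarith [min_le_right δ₀ δ₁]
    have := hd₁ ht hdist
    rw [Real.dist_eq, h₁, sub_zero] at this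
    linarith
  have hδφ : δ * δ ≤ t * (1 - t) := mul_le_mul hge (by linarith) hδ.le (by linarith)
  calc |g t| ≤ C := by simpa using hC t ht
    _ ≤ C / (δ * δ) * (t * (1 - t)) := by
      rw [div_mul_eq_mul_div, le_div_iff₀ (by positivity)]; gcongr
    _ ≤ ε + C / (δ * δ) * (t * (1 - t)) := by linarith

theorem iterates_minus_one_minus_one (n : ℕ) (hn : 1 ≤ n) :
    (∀ x ∈ Set.Ioo (0:ℝ) 1,
      BopE n (-1) (-1) (fun t => t ^ 2) x = n * x * (n * x + 1) / (n * (n + 1)) ∧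
        x ^ 2 < BopE n (-1) (-1) (fun t => t ^ 2) x) ∧
    ∀ f : ℝ → ℝ, ContinuousOn f (Set.Icc (0:ℝ) 1) →
      TendstoUniformlyOn (fun (m : ℕ) (x : ℝ) => (BopE n (-1) (-1))^[m] f x)
        (fun x => (1 - x) * f 0 + x * f 1) atTop (Set.Icc (0:ℝ) 1) := by
  have hN : (0:ℝ) < n := by exact_mod_cast hn
  refine ⟨fun x hx => ?_, fun f hf => ?_⟩
  · have hsq : (fun t : ℝ => t ^ 2) = fun t => 0 + 0 * t + 1 * t ^ 2 := by
      funext t; ring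
    rw [BopE_of_ne hx.1.ne' hx.2.ne, hsq, Bop_quadratic hN hx, zero_add, zero_mul, zero_add,
      one_mul, lt_div_iff₀ (by positivity)]
    exact ⟨by ring, by nlinarith [mul_pos (mul_pos hN hx.1) (sub_pos.2 hx.2)]⟩
  rw [Metric.tendstoUniformlyOn_iff]
  intro ε hε
  obtain ⟨M, hM, hfM⟩ := exists_abs_le_add_mul_of_continuousOn
    (g := fun t => f t - ((1 - t) * f 0 + t * f 1)) (hf.sub (by fun_prop)) (by simp) (by simp)
    (half_pos hε)
  have hbound := abs_iterate_BopE_sub_interpolant_le hN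
    ((hf.mono Ioc_subset_Icc_self).aestronglyMeasurable measurableSet_Ioc) hfM
  have hq : Tendsto (fun m => M * ((n:ℝ) / (n + 1)) ^ m) atTop (nhds 0) := by
    simpa using (tendsto_pow_atTop_nhds_zero_of_lt_one (by positivity)
      ((div_lt_one (by positivity)).2 (lt_add_one _))).const_mul M
  filter_upwards [hq.eventually (gt_mem_nhds (half_pos hε))] with m hm x hx
  have hφ : x * (1 - x) ≤ 1 := by nlinarith [hx.1, hx.2]
  rw [dist_comm, Real.dist_eq]
  calc _ ≤ ε / 2 + M * ((n:ℝ) / (n + 1)) ^ m * (x * (1 - x)) := hbound m x hx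
    _ ≤ ε / 2 + M * ((n:ℝ) / (n + 1)) ^ m := by
      have hc : 0 ≤ M * ((n:ℝ) / (n + 1)) ^ m := by positivity
      nlinarith
    _ < ε := by linarith
end

section
/- For α, β > -1 and n ≥ 1, the functionals μ_n on polynomials defined by μ_n(e_0) = 1 and, for k ≥ 1, μ_n(e_k) = Σ_{j=0}^{k-1} s_{k-j}(k,α)·n^j/((n+α+β+2)^{(k)} - n^k)·μ_n(e_j) — where s_{k-j}(k,α) is the elementary symmetric polynomial of degree k-j in α+1, α+2, ..., α+k — satisfy lim_{n→∞} μ_n(e_k) = (2α+2)^{(k)}/(2α+2β+4)^{(k)} for every k ≥ 0. -/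
open MeasureTheory intervalIntegral Filter

/-- `s_r(k,α)`: elementary symmetric sum of degree `r` of `α+1, …, α+k`. -/
noncomputable def esymmS (α : ℝ) (k r : ℕ) : ℝ :=
  (((Finset.range k).val.map fun i => α + i + 1).esymm r)

/-! The denominator `(n + α + β + 2)^{(k)} - n^k` grows like `L_k n^{k-1}` with
`L_k = k (2α + 2β + 3 + k) / 2`, so in the recurrence for `μ_n(e_k)` only the term `j = k - 1`
survives as `n → ∞`, and `μ_n(e_k) → s_1(k,α) / L_k · lim μ_n(e_{k-1})` by induction on `k`.
Since `s_1(k,α) = k (2α + 1 + k) / 2`, the factor `s_1(k,α) / L_k = (2α+1+k) / (2α+2β+3+k)` is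
exactly the ratio of consecutive quotients `(2α+2)^{(k)} / (2α+2β+4)^{(k)}`. -/

open Filter Topology

lemma esymmS_one (α : ℝ) (k : ℕ) : esymmS α k 1 = k * (2 * α + k + 1) / 2 :=
  calc esymmS α k 1 = ∑ i ∈ Finset.range k, (α + i + 1) := by
        simp [esymmS, Multiset.esymm, Multiset.powersetCard_one, Multiset.map_map, Finset.sum]
    _ = k * (2 * α + k + 1) / 2 := by
        induction k with
        | zero => simp
        | succ k ih => rw [Finset.sum_range_succ, ih]; push_cast; ring

lemma ascPochhammer_succ_eval_div (m : ℕ) (a b : ℝ) :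
    (ascPochhammer ℝ (m + 1)).eval a / (ascPochhammer ℝ (m + 1)).eval b =
      (a + m) / (b + m) * ((ascPochhammer ℝ m).eval a / (ascPochhammer ℝ m).eval b) := by
  rw [ascPochhammer_succ_eval, ascPochhammer_succ_eval, mul_div_mul_comm, mul_comm]

lemma tendsto_ascPochhammer_eval_add_sub_pow_div_pow (c : ℝ) (k : ℕ) :
    Tendsto (fun x : ℝ => ((ascPochhammer ℝ (k + 1)).eval (x + c) - x ^ (k + 1)) / x ^ k)
      atTop (𝓝 ((k + 1) * (2 * c + k) / 2)) := by
  induction k with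
  | zero => simp
  | succ k ih =>
    have hstep : Tendsto (fun x : ℝ =>
        ((ascPochhammer ℝ (k + 1)).eval (x + c) - x ^ (k + 1)) / x ^ k *
          (1 + (c + (k + 1)) * x⁻¹) + (c + (k + 1))) atTop
        (𝓝 ((k + 1) * (2 * c + k) / 2 * (1 + (c + (k + 1)) * 0) + (c + (k + 1)))) :=
      (ih.mul (tendsto_inv_atTop_zero.const_mul _ |>.const_add 1)).add_const _
    convert hstep.congr' ?_ using 2
    · push_cast; ring
    · filter_upwards [eventually_ne_atTop 0] with x hx
      rw [ascPochhammer_succ_eval (k + 1)]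
      push_cast
      field_simp
      ring

lemma tendsto_sum_range_succ_pow_div_mul {D s ℓ : ℕ → ℝ} {a : ℕ → ℕ → ℝ} {m : ℕ} {L : ℝ}
    (hL : L ≠ 0) (hD : Tendsto (fun n : ℕ => D n / (n : ℝ) ^ m) atTop (𝓝 L))
    (ha : ∀ j ≤ m, Tendsto (fun n => a n j) atTop (𝓝 (ℓ j))) :
    Tendsto (fun n : ℕ => ∑ j ∈ Finset.range (m + 1), s j * (n : ℝ) ^ j / D n * a n j) atTop
      (𝓝 (s m / L * ℓ m)) := by
  have hinv : Tendsto (fun n : ℕ => (n : ℝ) ^ m / D n) atTop (𝓝 L⁻¹) := by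
    simpa only [inv_div] using hD.inv₀ hL
  have hlow : ∀ j < m, Tendsto (fun n : ℕ => s j * (n : ℝ) ^ j / D n * a n j) atTop (𝓝 0) := by
    intro j hj
    have hpow : Tendsto (fun n : ℕ => ((n : ℝ)⁻¹) ^ (m - j)) atTop (𝓝 0) := by
      simpa [zero_pow (Nat.sub_ne_zero_of_lt hj)] using
        (tendsto_inv_atTop_nhds_zero_nat (𝕜 := ℝ)).pow (m - j)
    have h := ((hpow.mul hinv).const_mul (s j)).mul (ha j hj.le)
    rw [zero_mul, mul_zero, zero_mul] at h
    refine h.congr' ?_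
    filter_upwards [eventually_ne_atTop 0] with n hn
    have hn : (n : ℝ) ≠ 0 := Nat.cast_ne_zero.mpr hn
    rw [← Nat.sub_add_cancel hj.le, pow_add, inv_pow, Nat.add_sub_cancel]
    field_simp
  have htop : Tendsto (fun n : ℕ => s m * (n : ℝ) ^ m / D n * a n m) atTop
      (𝓝 (s m / L * ℓ m)) := by
    simpa only [mul_div_assoc, div_eq_mul_inv, mul_assoc] using
      (hinv.const_mul (s m)).mul (ha m le_rfl)
  simp_rw [Finset.sum_range_succ]
  simpa using (tendsto_finsetSum _ fun j hj => hlow j (Finset.mem_range.mp hj)).add htop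

theorem mu_n_limit (α β : ℝ) (hα : α > -1) (hβ : β > -1)
    (μ : ℕ → ℕ → ℝ) (hμ0 : ∀ n : ℕ, 1 ≤ n → μ n 0 = 1)
    (hrec : ∀ n : ℕ, 1 ≤ n → ∀ k : ℕ, 1 ≤ k →
      μ n k = ∑ j ∈ Finset.range k,
        esymmS α k (k - j) * (n : ℝ) ^ j /
            ((ascPochhammer ℝ k).eval ((n : ℝ) + α + β + 2) - (n : ℝ) ^ k) * μ n j) :
    ∀ k : ℕ,
      Filter.Tendsto (fun n : ℕ => μ n k) Filter.atTop
        (nhds ((ascPochhammer ℝ k).eval (2 * α + 2) /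
          (ascPochhammer ℝ k).eval (2 * α + 2 * β + 4))) := by
  intro k
  induction k using Nat.strong_induction_on with
  | _ k ih =>
  rcases k with _ | m
  · simpa using tendsto_const_nhds.congr' <|
      (eventually_ge_atTop 1).mono fun n hn => (hμ0 n hn).symm
  have hD : Tendsto (fun n : ℕ => ((ascPochhammer ℝ (m + 1)).eval ((n : ℝ) + α + β + 2) -
      (n : ℝ) ^ (m + 1)) / (n : ℝ) ^ m) atTop (𝓝 (((m : ℝ) + 1) * (2 * (α + β + 2) + m) / 2)) := by
    simpa only [Function.comp_def, add_assoc] using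
      (tendsto_ascPochhammer_eval_add_sub_pow_div_pow (α + β + 2) m).comp
        tendsto_natCast_atTop_atTop
  have hL : ((m : ℝ) + 1) * (2 * (α + β + 2) + m) / 2 ≠ 0 := by
    have hpos : 0 < 2 * (α + β + 2) + m := by linarith [m.cast_nonneg (α := ℝ)]
    positivity
  have hlim := tendsto_sum_range_succ_pow_div_mul (s := fun j => esymmS α (m + 1) (m + 1 - j))
    (a := μ) hL hD fun j hj => ih j (by omega)
  have hval : esymmS α (m + 1) (m + 1 - m) / (((m : ℝ) + 1) * (2 * (α + β + 2) + m) / 2) =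
      (2 * α + 2 + m) / (2 * α + 2 * β + 4 + m) := by
    rw [Nat.add_sub_cancel_left, esymmS_one]
    push_cast
    field_simp
    ring
  rw [ascPochhammer_succ_eval_div, ← hval]
  exact hlim.congr' <| (eventually_ge_atTop 1).mono fun n hn => (hrec n hn (m + 1) (by omega)).symm
end
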